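/- Let Λ, Λ' : M_{d_A}(ℂ) → M_{d_B}(ℂ) be channels with (1/2)‖Λ − Λ'‖_⋄ ≤ ε. Then 1 + 2R^τ(Λ'|Λ) ≥ (1 − 2ε)(1 + 2R^τ(Λ)). -/

import Mathlib

open Matrix
open scoped ComplexOrder

section Defs

variable {ιA ιB : Type*}

def ptranspose (M : Matrix (ιA × ιB) (ιA × ιB) ℂ) : Matrix (ιA × ιB) (ιA × ιB) ℂ :=
  Matrix.of fun p q => M (p.1, q.2) (q.1, p.2)

def IsPPT [Fintype ιA] [Fintype ιB] (M : Matrix (ιA × ιB) (ιA × ιB) ℂ) : Prop :=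
  M.PosSemidef ∧ (ptranspose M).PosSemidef

def IsState {ι : Type*} [Fintype ι] (ρ : Matrix ι ι ℂ) : Prop :=
  ρ.PosSemidef ∧ ρ.trace = 1

def idTensor (ιR : Type*) (Φ : Matrix ιA ιA ℂ →ₗ[ℂ] Matrix ιB ιB ℂ) :
    Matrix (ιR × ιA) (ιR × ιA) ℂ →ₗ[ℂ] Matrix (ιR × ιB) (ιR × ιB) ℂ where
  toFun M := Matrix.of fun p q => Φ (Matrix.of fun a b => M (p.1, a) (q.1, b)) p.2 q.2
  map_add' M N := by
    funext p q
    show Φ ((Matrix.of fun a b => M (p.1, a) (q.1, b)) + (Matrix.of fun a b => N (p.1, a) (q.1, b))) p.2 q.2 = _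
    rw [map_add]
    rfl
  map_smul' c M := by
    funext p q
    show Φ (c • (Matrix.of fun a b => M (p.1, a) (q.1, b))) p.2 q.2 = _
    rw [_root_.map_smul]
    rfl

noncomputable def opNorm {ι : Type*} [Fintype ι] [DecidableEq ι] (M : Matrix ι ι ℂ) : ℝ :=
  ‖Matrix.toEuclideanCLM (𝕜 := ℂ) (n := ι) M‖

noncomputable def traceNorm {ι : Type*} [Fintype ι] [DecidableEq ι] (M : Matrix ι ι ℂ) : ℝ :=
  (((Matrix.posSemidef_conjTranspose_mul_self M).1.eigenvectorUnitary.1 *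
    Matrix.diagonal (((↑) : ℝ → ℂ) ∘ (Real.sqrt ·) ∘ (Matrix.posSemidef_conjTranspose_mul_self M).1.eigenvalues) *
    (star (Matrix.posSemidef_conjTranspose_mul_self M).1.eigenvectorUnitary : Matrix ι ι ℂ)).trace).re

/-- The tempered negativity `N_τ(ρ|ω)`. -/
noncomputable def temperedNegRel [Fintype ιA] [Fintype ιB] [DecidableEq ιA] [DecidableEq ιB]
    (ρ ω : Matrix (ιA × ιB) (ιA × ιB) ℂ) : ℝ :=
  sSup {t : ℝ | ∃ X : Matrix (ιA × ιB) (ιA × ιB) ℂ, X.IsHermitian ∧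
    opNorm (ptranspose X) ≤ 1 ∧ opNorm X = ((X * ω).trace).re ∧ t = ((X * ρ).trace).re}

noncomputable def temperedNeg [Fintype ιA] [Fintype ιB] [DecidableEq ιA] [DecidableEq ιB]
    (ρ : Matrix (ιA × ιB) (ιA × ιB) ℂ) : ℝ :=
  temperedNegRel ρ ρ

/-- The tempered PPT robustness `R^τ(ρ|ω)`, via `1 + 2 R^τ(ρ|ω) = sup {...}`. -/
noncomputable def temperedRobRel [Fintype ιA] [Fintype ιB] [DecidableEq ιA] [DecidableEq ιB]
    (ρ ω : Matrix (ιA × ιB) (ιA × ιB) ℂ) : ℝ :=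
  (sSup {t : ℝ | ∃ X : Matrix (ιA × ιB) (ιA × ιB) ℂ, X.IsHermitian ∧
    (∀ W : Matrix (ιA × ιB) (ιA × ιB) ℂ, IsPPT W → |((X * W).trace).re| ≤ (W.trace).re) ∧
    opNorm X = ((X * ω).trace).re ∧ t = ((X * ρ).trace).re} - 1) / 2

noncomputable def temperedRob [Fintype ιA] [Fintype ιB] [DecidableEq ιA] [DecidableEq ιB]
    (ρ : Matrix (ιA × ιB) (ιA × ιB) ℂ) : ℝ :=
  temperedRobRel ρ ρ

/-- The channel tempered negativity. -/
noncomputable def chanTemperedNeg [Fintype ιA] [Fintype ιB] [DecidableEq ιA] [DecidableEq ιB]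
    (Λ : Matrix ιA ιA ℂ →ₗ[ℂ] Matrix ιB ιB ℂ) : ℝ :=
  sSup {t : ℝ | ∃ ρ : Matrix (ιA × ιA) (ιA × ιA) ℂ, IsState ρ ∧
    t = temperedNeg ((idTensor ιA Λ) ρ)}

/-- The channel tempered robustness `R^τ(Λ'|Λ)`. -/
noncomputable def chanTemperedRobRel [Fintype ιA] [Fintype ιB] [DecidableEq ιA] [DecidableEq ιB]
    (Λ' Λ : Matrix ιA ιA ℂ →ₗ[ℂ] Matrix ιB ιB ℂ) : ℝ :=
  sSup {t : ℝ | ∃ ρ : Matrix (ιA × ιA) (ιA × ιA) ℂ, IsState ρ ∧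
    t = temperedRobRel ((idTensor ιA Λ') ρ) ((idTensor ιA Λ) ρ)}

/-- The diamond norm. -/
noncomputable def diamondNorm [Fintype ιA] [Fintype ιB] [DecidableEq ιA] [DecidableEq ιB]
    (Φ : Matrix ιA ιA ℂ →ₗ[ℂ] Matrix ιB ιB ℂ) : ℝ :=
  sSup {t : ℝ | ∃ ρ : Matrix (ιA × ιA) (ιA × ιA) ℂ, IsState ρ ∧
    t = traceNorm ((idTensor ιA Φ) ρ)}

/-- The `n`-fold tensor power of a linear map on matrices. -/
noncomputable def tensorPow [Fintype ιA] [DecidableEq ιA] (n : ℕ)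
    (Λ : Matrix ιA ιA ℂ →ₗ[ℂ] Matrix ιB ιB ℂ) :
    Matrix (Fin n → ιA) (Fin n → ιA) ℂ →ₗ[ℂ] Matrix (Fin n → ιB) (Fin n → ιB) ℂ where
  toFun M := Matrix.of fun p q => ∑ a : Fin n → ιA, ∑ b : Fin n → ιA,
      M a b * ∏ i, Λ (Matrix.single (a i) (b i) 1) (p i) (q i)
  map_add' M N := by
    funext p q
    simp [Matrix.add_apply, add_mul, Finset.sum_add_distrib]
  map_smul' c M := by
    funext p q
    simp [Matrix.smul_apply, Finset.mul_sum, mul_assoc]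

/-- The `n`-fold tensor power of a bipartite state, regarded as bipartite across the `Aⁿ:Bⁿ` cut. -/
noncomputable def statePow (n : ℕ) (ρ : Matrix (ιA × ιB) (ιA × ιB) ℂ) :
    Matrix ((Fin n → ιA) × (Fin n → ιB)) ((Fin n → ιA) × (Fin n → ιB)) ℂ :=
  Matrix.of fun p q => ∏ i, ρ (p.1 i, p.2 i) (q.1 i, q.2 i)

/-- The Choi matrix `J_Φ = (1/d_A) ∑_{ij} |i⟩⟨j| ⊗ Φ(|i⟩⟨j|)`. -/
noncomputable def choi [Fintype ιA] [DecidableEq ιA]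
    (Φ : Matrix ιA ιA ℂ →ₗ[ℂ] Matrix ιB ιB ℂ) : Matrix (ιA × ιB) (ιA × ιB) ℂ :=
  Matrix.of fun p q => (Fintype.card ιA : ℂ)⁻¹ * Φ (Matrix.single p.1 q.1 1) p.2 q.2


/-- Complete positivity. -/
def IsCP [Fintype ιA] [Fintype ιB] (Φ : Matrix ιA ιA ℂ →ₗ[ℂ] Matrix ιB ιB ℂ) : Prop :=
  ∀ (k : ℕ) (X : Matrix (Fin k × ιA) (Fin k × ιA) ℂ), X.PosSemidef →
    ((idTensor (Fin k) Φ) X).PosSemidef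

/-- Trace preservation. -/
def IsTP [Fintype ιA] [Fintype ιB] (Φ : Matrix ιA ιA ℂ →ₗ[ℂ] Matrix ιB ιB ℂ) : Prop :=
  ∀ X : Matrix ιA ιA ℂ, (Φ X).trace = X.trace

/-- A quantum channel: completely positive and trace preserving. -/
def IsChannel [Fintype ιA] [Fintype ιB] (Φ : Matrix ιA ιA ℂ →ₗ[ℂ] Matrix ιB ιB ℂ) : Prop :=
  IsCP Φ ∧ IsTP Φ

/-- A map is PPT-binding if `id_k ⊗ Φ` sends positive semidefinite matrices to PPT matrices. -/
def PPTBinding [Fintype ιA] [Fintype ιB] (Φ : Matrix ιA ιA ℂ →ₗ[ℂ] Matrix ιB ιB ℂ) : Prop :=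
  ∀ (k : ℕ) (X : Matrix (Fin k × ιA) (Fin k × ιA) ℂ), X.PosSemidef →
    IsPPT ((idTensor (Fin k) Φ) X)

/-- A PPT-binding channel. -/
def PPTBindingChannel [Fintype ιA] [Fintype ιB] (Φ : Matrix ιA ιA ℂ →ₗ[ℂ] Matrix ιB ιB ℂ) : Prop :=
  IsChannel Φ ∧ PPTBinding Φ

/-- The channel robustness with respect to PPT-binding channels. -/
noncomputable def RKE [Fintype ιA] [Fintype ιB] (Λ : Matrix ιA ιA ℂ →ₗ[ℂ] Matrix ιB ιB ℂ) : ℝ :=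
  sInf {l : ℝ | 0 ≤ l ∧ ∃ Γ Θ : Matrix ιA ιA ℂ →ₗ[ℂ] Matrix ιB ιB ℂ,
    PPTBindingChannel Γ ∧ PPTBindingChannel Θ ∧ Λ + (l : ℂ) • Γ = ((1 + l : ℝ) : ℂ) • Θ}

/-- The PPT robustness of a state. -/
noncomputable def RPPT [Fintype ιA] [Fintype ιB] (ρ : Matrix (ιA × ιB) (ιA × ιB) ℂ) : ℝ :=
  sInf {t : ℝ | ∃ δ : Matrix (ιA × ιB) (ιA × ιB) ℂ, IsPPT δ ∧ IsPPT (ρ + δ) ∧ (δ.trace).re = t}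


end Defs

/-!
A witness `X ∈ [-1,1]_{K*}` with `‖X‖_∞ = Tr Xω` stays admissible in the supremum defining
`R^τ(ω'|ω)`, and by Hölder's inequality `Tr Xω' ≥ Tr Xω - ‖X‖_∞ ‖ω - ω'‖₁ = (1 - ‖ω - ω'‖₁) Tr Xω`.
For `ω = (id ⊗ Λ)ρ` and `ω' = (id ⊗ Λ')ρ` we have `‖ω - ω'‖₁ ≤ ‖Λ - Λ'‖_⋄ ≤ 2ε`; taking suprema
over `X` and then over `ρ` gives the claim.

The suprema are finite and at least `1`: `X = 1` is always admissible, and an admissible `X` has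
`‖X‖_∞ ≤ 2D + 1` (`D` the total dimension), as one sees by testing it against the PPT operators
`1` and `1 + |v⟩⟨v|`, the latter being PPT because `‖(|v⟩⟨v|)^Γ‖_∞ ≤ ‖(|v⟩⟨v|)^Γ‖₂ = ‖|v⟩⟨v|‖₂ = 1`.
-/

lemma Real.mul_sSup_le {S : Set ℝ} {c b : ℝ} (hS : 0 ≤ sSup S) (hb : 0 ≤ b)
    (h : ∀ x ∈ S, c * x ≤ b) : c * sSup S ≤ b := by
  rcases le_or_gt c 0 with hc | hc
  · exact (mul_nonpos_of_nonpos_of_nonneg hc hS).trans hb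
  · rw [← le_div_iff₀' hc]
    exact Real.sSup_le (fun x hx => (le_div_iff₀' hc).2 (h x hx)) (div_nonneg hb hc.le)

lemma mul_one_add_two_mul_sSup_le {α : Type*} {P : α → Prop} {f g : α → ℝ} {c : ℝ}
    (hc : c ≤ 1) (hf : ∀ x, P x → 0 ≤ f x) (hg : ∀ x, P x → 0 ≤ g x)
    (hbdd : BddAbove {t | ∃ x, P x ∧ t = g x})
    (h : ∀ x, P x → c * (1 + 2 * f x) ≤ 1 + 2 * g x) :
    c * (1 + 2 * sSup {t | ∃ x, P x ∧ t = f x}) ≤ 1 + 2 * sSup {t | ∃ x, P x ∧ t = g x} := by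
  have hG : 0 ≤ sSup {t | ∃ x, P x ∧ t = g x} :=
    Real.sSup_nonneg (by rintro _ ⟨x, hx, rfl⟩; exact hg x hx)
  have hF : 0 ≤ sSup {t | ∃ x, P x ∧ t = f x} :=
    Real.sSup_nonneg (by rintro _ ⟨x, hx, rfl⟩; exact hf x hx)
  have key := Real.mul_sSup_le (c := 2 * c) (b := 1 - c + 2 * sSup {t | ∃ x, P x ∧ t = g x})
    hF (by linarith) (by
      rintro _ ⟨x, hx, rfl⟩
      have := le_csSup hbdd ⟨x, hx, rfl⟩
      linarith [h x hx])
  linarith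

open scoped Matrix.Norms.L2Operator MatrixOrder

namespace Matrix

variable {n : Type*} [Fintype n]

lemma re_trace_le_re_trace {A B : Matrix n n ℂ} (h : A ≤ B) : A.trace.re ≤ B.trace.re := by
  have h₀ := (Complex.nonneg_iff.mp (le_iff.mp h).trace_nonneg).1
  rwa [trace_sub, Complex.sub_re, sub_nonneg] at h₀

variable [DecidableEq n]

lemma IsHermitian.l2_opNorm_eq {A : Matrix n n ℂ} (hA : A.IsHermitian) :
    ‖A‖ = ‖(RCLike.ofReal ∘ hA.eigenvalues : n → ℂ)‖ := by
  set U := hA.eigenvectorUnitary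
  have h : A = (U : Matrix n n ℂ) * (diagonal (RCLike.ofReal ∘ hA.eigenvalues) *
      ((star U : unitaryGroup n ℂ) : Matrix n n ℂ)) := by
    rw [← mul_assoc, Unitary.coe_star]; exact hA.spectral_theorem
  conv_lhs => rw [h]
  rw [CStarRing.norm_coe_unitary_mul, CStarRing.norm_mul_coe_unitary, l2_opNorm_diagonal]

lemma IsHermitian.norm_le_of_forall_abs_eigenvalues_le {A : Matrix n n ℂ} (hA : A.IsHermitian)
    {c : ℝ} (hc : 0 ≤ c) (h : ∀ i, |hA.eigenvalues i| ≤ c) : ‖A‖ ≤ c := by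
  rw [hA.l2_opNorm_eq]
  exact (pi_norm_le_iff_of_nonneg hc).2 fun i => by simpa using h i

lemma PosSemidef.norm_le_re_trace {P : Matrix n n ℂ} (hP : P.PosSemidef) : ‖P‖ ≤ P.trace.re := by
  have htr : P.trace.re = ∑ i, hP.1.eigenvalues i := by simp [hP.1.trace_eq_sum_eigenvalues]
  have hev := hP.eigenvalues_nonneg
  rw [htr]
  refine hP.1.norm_le_of_forall_abs_eigenvalues_le (Finset.sum_nonneg fun i _ => hev i) fun i => ?_
  rw [abs_of_nonneg (hev i)]
  exact Finset.single_le_sum (fun j _ => hev j) (Finset.mem_univ i)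

lemma norm_sq_le_sum_norm_sq (A : Matrix n n ℂ) : ‖A‖ ^ 2 ≤ ∑ i, ∑ j, ‖A i j‖ ^ 2 := by
  have h := (posSemidef_conjTranspose_mul_self A).norm_le_re_trace
  rw [l2_opNorm_conjTranspose_mul_self, ← sq] at h
  refine h.trans_eq ?_
  simp only [trace, diag, mul_apply, conjTranspose_apply, Complex.re_sum, RCLike.star_def,
    Complex.conj_mul', ← Complex.ofReal_pow, Complex.ofReal_re]
  exact Finset.sum_comm

lemma re_trace_algebraMap (r : ℝ) :
    (algebraMap ℝ (Matrix n n ℂ) r).trace.re = Fintype.card n * r := by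
  simp [Algebra.algebraMap_eq_smul_one, trace_smul, mul_comm]

lemma IsHermitian.re_trace_mul_le {X P : Matrix n n ℂ} (hX : X.IsHermitian)
    (hP : P.PosSemidef) : (X * P).trace.re ≤ ‖X‖ * P.trace.re := by
  set S := CFC.sqrt P
  have hS : star S = S := (CFC.sqrt_nonneg P).isSelfAdjoint.star_eq
  have hSS : S * S = P := CFC.sqrt_mul_sqrt_self P hP.nonneg
  have hconj := re_trace_le_re_trace
    (star_left_conjugate_le_conjugate (IsSelfAdjoint.le_algebraMap_norm_self hX) S)
  have hlhs : (S * X * S).trace = (X * P).trace := by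
    rw [trace_mul_cycle, ← hSS, trace_mul_comm]
  have hrhs : S * algebraMap ℝ (Matrix n n ℂ) ‖X‖ * S = ‖X‖ • P := by
    rw [Algebra.algebraMap_eq_smul_one, mul_smul_comm, mul_one, smul_mul_assoc, hSS]
  rwa [hS, hlhs, hrhs, trace_smul, Complex.real_smul, Complex.re_ofReal_mul] at hconj

lemma IsHermitian.abs_re_trace_mul_le {X P : Matrix n n ℂ} (hX : X.IsHermitian)
    (hP : P.PosSemidef) : |(X * P).trace.re| ≤ ‖X‖ * P.trace.re := by
  have hneg := hX.neg.re_trace_mul_le hP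
  rw [norm_neg, Matrix.neg_mul, trace_neg, Complex.neg_re] at hneg
  exact abs_le.2 ⟨by linarith, hX.re_trace_mul_le hP⟩

lemma traceNorm_eq_re_trace_abs (M : Matrix n n ℂ) : traceNorm M = (CFC.abs M).trace.re := by
  rw [CFC.abs, star_eq_conjTranspose,
    CFC.sqrt_eq_real_sqrt _ (posSemidef_conjTranspose_mul_self M).nonneg,
    cfcₙ_eq_cfc (hf := Real.continuous_sqrt.continuousOn) (hf0 := Real.sqrt_zero),
    (posSemidef_conjTranspose_mul_self M).1.cfc_eq]
  rfl

lemma traceNorm_nonneg (M : Matrix n n ℂ) : 0 ≤ traceNorm M := by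
  rw [traceNorm_eq_re_trace_abs]
  exact (Complex.nonneg_iff.mp (nonneg_iff_posSemidef.mp (CFC.abs_nonneg M)).trace_nonneg).1

lemma traceNorm_le_card_mul_norm (M : Matrix n n ℂ) : traceNorm M ≤ Fintype.card n * ‖M‖ := by
  rw [traceNorm_eq_re_trace_abs, ← CFC.norm_abs (a := M), ← re_trace_algebraMap]
  exact re_trace_le_re_trace IsSelfAdjoint.le_algebraMap_norm_self

lemma IsHermitian.abs_re_trace_mul_le_traceNorm {X M : Matrix n n ℂ} (hX : X.IsHermitian)
    (hM : M.IsHermitian) : |(X * M).trace.re| ≤ ‖X‖ * traceNorm M := by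
  have hpos := hX.abs_re_trace_mul_le (nonneg_iff_posSemidef.mp (CFC.posPart_nonneg M))
  have hneg := hX.abs_re_trace_mul_le (nonneg_iff_posSemidef.mp (CFC.negPart_nonneg M))
  rw [traceNorm_eq_re_trace_abs, ← CFC.posPart_add_negPart M hM, trace_add, Complex.add_re, mul_add]
  conv_lhs => rw [← CFC.posPart_sub_negPart M hM, Matrix.mul_sub, trace_sub, Complex.sub_re]
  exact (abs_sub _ _).trans (add_le_add hpos hneg)

end Matrix

section PartialTranspose

open Matrix
variable {ιA ιB : Type*}

lemma ptranspose_add (M N : Matrix (ιA × ιB) (ιA × ιB) ℂ) :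
    ptranspose (M + N) = ptranspose M + ptranspose N := rfl

lemma ptranspose_one [DecidableEq ιA] [DecidableEq ιB] :
    ptranspose (1 : Matrix (ιA × ιB) (ιA × ιB) ℂ) = 1 := by
  ext p q
  simp only [ptranspose, of_apply, one_apply, Prod.ext_iff]
  by_cases h₁ : p.1 = q.1 <;> by_cases h₂ : p.2 = q.2 <;> simp [h₁, h₂, eq_comm]

lemma Matrix.IsHermitian.ptranspose {M : Matrix (ιA × ιB) (ιA × ιB) ℂ} (hM : M.IsHermitian) :
    (ptranspose M).IsHermitian := by
  ext p q
  simpa [_root_.ptranspose, conjTranspose_apply] using congrFun (congrFun hM (p.1, q.2)) (q.1, p.2)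

variable [Fintype ιA] [Fintype ιB]

lemma sum_norm_sq_ptranspose (M : Matrix (ιA × ιB) (ιA × ιB) ℂ) :
    ∑ p, ∑ q, ‖ptranspose M p q‖ ^ 2 = ∑ p, ∑ q, ‖M p q‖ ^ 2 := by
  let swap : (ιA × ιB) × (ιA × ιB) → (ιA × ιB) × (ιA × ιB) :=
    fun x => ((x.1.1, x.2.2), (x.2.1, x.1.2))
  have hswap : Function.Involutive swap := fun _ => rfl
  rw [← Fintype.sum_prod_type', ← Fintype.sum_prod_type']
  exact Fintype.sum_equiv hswap.toPerm _ _ fun _ => rfl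

variable [DecidableEq ιA] [DecidableEq ιB]

lemma isPPT_one : IsPPT (1 : Matrix (ιA × ιB) (ιA × ιB) ℂ) :=
  ⟨PosSemidef.one, by rw [ptranspose_one]; exact PosSemidef.one⟩

lemma norm_ptranspose_vecMulVec_le {v : ιA × ιB → ℂ} (hv : ∑ p, ‖v p‖ ^ 2 = 1) :
    ‖ptranspose (vecMulVec v (star v))‖ ≤ 1 := by
  have h := norm_sq_le_sum_norm_sq (ptranspose (vecMulVec v (star v)))
  simp only [sum_norm_sq_ptranspose, vecMulVec_apply, Pi.star_apply, norm_mul, norm_star, mul_pow,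
    ← Finset.mul_sum, ← Finset.sum_mul, hv, one_mul] at h
  exact (pow_le_one_iff_of_nonneg (norm_nonneg _) two_ne_zero).1 h

lemma isPPT_one_add_vecMulVec {v : ιA × ιB → ℂ} (hv : ∑ p, ‖v p‖ ^ 2 = 1) :
    IsPPT (1 + vecMulVec v (star v)) := by
  refine ⟨PosSemidef.one.add (posSemidef_vecMulVec_self_star v), ?_⟩
  set H := ptranspose (vecMulVec v (star v))
  have hH : -algebraMap ℝ _ ‖H‖ ≤ H :=
    IsSelfAdjoint.neg_algebraMap_norm_le_self (posSemidef_vecMulVec_self_star v).1.ptranspose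
  have hone : algebraMap ℝ (Matrix (ιA × ιB) (ιA × ιB) ℂ) ‖H‖ ≤ 1 := by
    simpa using algebraMap_mono (Matrix (ιA × ιB) (ιA × ιB) ℂ) (norm_ptranspose_vecMulVec_le hv)
  rw [ptranspose_add, ptranspose_one, ← nonneg_iff_posSemidef, ← neg_le_iff_add_nonneg']
  exact (neg_le_neg hone).trans hH

lemma Matrix.IsHermitian.norm_le_of_forall_isPPT {X : Matrix (ιA × ιB) (ιA × ιB) ℂ}
    (hX : X.IsHermitian) (hW : ∀ W, IsPPT W → |(X * W).trace.re| ≤ W.trace.re) :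
    ‖X‖ ≤ 2 * Fintype.card (ιA × ιB) + 1 := by
  refine hX.norm_le_of_forall_abs_eigenvalues_le (by positivity) fun i => ?_
  set v : ιA × ιB → ℂ := ⇑(hX.eigenvectorBasis i)
  have hv : ∑ p, ‖v p‖ ^ 2 = 1 := by
    have h := hX.eigenvectorBasis.orthonormal.1 i
    rwa [EuclideanSpace.norm_eq, Real.sqrt_eq_one] at h
  have hev : hX.eigenvalues i = (X * vecMulVec v (star v)).trace.re := by
    rw [hX.eigenvalues_eq i, mul_vecMulVec, trace_vecMulVec, dotProduct_comm]; rfl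
  have htr : (vecMulVec v (star v)).trace.re = 1 := by
    simpa [trace_vecMulVec, dotProduct, Complex.mul_conj', ← Complex.ofReal_pow] using hv
  have h₁ := hW 1 isPPT_one
  have h₂ := hW _ (isPPT_one_add_vecMulVec hv)
  rw [mul_one] at h₁
  rw [mul_add, mul_one, trace_add, trace_add, Complex.add_re, Complex.add_re, htr] at h₂
  rw [trace_one] at h₁ h₂
  simp only [Complex.natCast_re] at h₁ h₂
  rw [hev, abs_le]
  constructor <;> linarith [abs_le.mp h₁, abs_le.mp h₂]

end PartialTranspose

section TemperedRobustness

open Matrix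
variable {ιA ιB : Type*} [Fintype ιA] [Fintype ιB] [DecidableEq ιA] [DecidableEq ιB]

def temperedRobValues (σ ω : Matrix (ιA × ιB) (ιA × ιB) ℂ) : Set ℝ :=
  {t : ℝ | ∃ X : Matrix (ιA × ιB) (ιA × ιB) ℂ, X.IsHermitian ∧
    (∀ W : Matrix (ιA × ιB) (ιA × ιB) ℂ, IsPPT W → |((X * W).trace).re| ≤ (W.trace).re) ∧
    opNorm X = ((X * ω).trace).re ∧ t = ((X * σ).trace).re}

lemma one_add_two_mul_temperedRobRel (σ ω : Matrix (ιA × ιB) (ιA × ιB) ℂ) :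
    1 + 2 * temperedRobRel σ ω = sSup (temperedRobValues σ ω) := by
  rw [temperedRobRel, temperedRobValues]; ring

lemma temperedRobValues_le {σ : Matrix (ιA × ιB) (ιA × ιB) ℂ} (hσ : IsState σ)
    (ω : Matrix (ιA × ιB) (ιA × ιB) ℂ) :
    ∀ t ∈ temperedRobValues σ ω, t ≤ 2 * Fintype.card (ιA × ιB) + 1 := by
  rintro _ ⟨X, hX, hW, -, rfl⟩
  have h := hX.abs_re_trace_mul_le hσ.1
  rw [hσ.2, Complex.one_re, mul_one] at h
  exact (le_abs_self _).trans (h.trans (hX.norm_le_of_forall_isPPT hW))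

lemma one_mem_temperedRobValues {σ ω : Matrix (ιA × ιB) (ιA × ιB) ℂ} (hσ : IsState σ)
    (hω : IsState ω) : 1 ∈ temperedRobValues σ ω := by
  have : Nonempty (ιA × ιB) := by
    by_contra h
    rw [not_nonempty_iff] at h
    simpa [trace] using hω.2
  refine ⟨1, isHermitian_one, fun W hW => ?_, ?_, ?_⟩
  · rw [one_mul, abs_of_nonneg (Complex.nonneg_iff.mp hW.1.trace_nonneg).1]
  · rw [one_mul, hω.2, Complex.one_re]
    exact (CStarRing.norm_one : ‖(1 : Matrix (ιA × ιB) (ιA × ιB) ℂ)‖ = 1)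
  · rw [one_mul, hσ.2, Complex.one_re]

lemma one_le_sSup_temperedRobValues {σ ω : Matrix (ιA × ιB) (ιA × ιB) ℂ} (hσ : IsState σ)
    (hω : IsState ω) : 1 ≤ sSup (temperedRobValues σ ω) :=
  le_csSup ⟨_, temperedRobValues_le hσ ω⟩ (one_mem_temperedRobValues hσ hω)

lemma temperedRobRel_nonneg {σ ω : Matrix (ιA × ιB) (ιA × ιB) ℂ} (hσ : IsState σ)
    (hω : IsState ω) : 0 ≤ temperedRobRel σ ω := by
  linarith [one_add_two_mul_temperedRobRel σ ω, one_le_sSup_temperedRobValues hσ hω]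

lemma temperedRobRel_le_card {σ : Matrix (ιA × ιB) (ιA × ιB) ℂ} (hσ : IsState σ)
    (ω : Matrix (ιA × ιB) (ιA × ιB) ℂ) : temperedRobRel σ ω ≤ Fintype.card (ιA × ιB) := by
  have h := Real.sSup_le (temperedRobValues_le hσ ω) (by positivity)
  linarith [one_add_two_mul_temperedRobRel σ ω]

lemma mul_one_add_two_mul_temperedRobRel_le {ω ω' : Matrix (ιA × ιB) (ιA × ιB) ℂ}
    (hω : IsState ω) (hω' : IsState ω') {δ : ℝ} (hδ : traceNorm (ω - ω') ≤ δ) :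
    (1 - δ) * (1 + 2 * temperedRobRel ω ω) ≤ 1 + 2 * temperedRobRel ω' ω := by
  rw [one_add_two_mul_temperedRobRel, one_add_two_mul_temperedRobRel]
  refine Real.mul_sSup_le (zero_le_one.trans (one_le_sSup_temperedRobValues hω hω))
    (zero_le_one.trans (one_le_sSup_temperedRobValues hω' hω)) ?_
  rintro _ ⟨X, hX, hW, hXω : ‖X‖ = (X * ω).trace.re, rfl⟩
  have hdiff := hX.abs_re_trace_mul_le_traceNorm (hω.1.1.sub hω'.1.1)
  rw [Matrix.mul_sub, trace_sub, Complex.sub_re, ← hXω] at hdiff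
  have hmem : (X * ω').trace.re ∈ temperedRobValues ω' ω := ⟨X, hX, hW, hXω, rfl⟩
  rw [← hXω]
  calc (1 - δ) * ‖X‖ ≤ (X * ω').trace.re := by
        nlinarith [(abs_le.mp hdiff).2, mul_le_mul_of_nonneg_left hδ (norm_nonneg X)]
    _ ≤ _ := le_csSup ⟨_, temperedRobValues_le hω' ω⟩ hmem

end TemperedRobustness

section Channels

open Matrix

lemma idTensor_sub {ιA ιB : Type*} (ιR : Type*) (Φ Ψ : Matrix ιA ιA ℂ →ₗ[ℂ] Matrix ιB ιB ℂ)
    (M : Matrix (ιR × ιA) (ιR × ιA) ℂ) :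
    idTensor ιR (Φ - Ψ) M = idTensor ιR Φ M - idTensor ιR Ψ M := rfl

lemma trace_idTensor {ιA ιB ιR : Type*} [Fintype ιA] [Fintype ιB] [Fintype ιR]
    {Φ : Matrix ιA ιA ℂ →ₗ[ℂ] Matrix ιB ιB ℂ} (hΦ : IsTP Φ) (M : Matrix (ιR × ιA) (ιR × ιA) ℂ) :
    (idTensor ιR Φ M).trace = M.trace := by
  simp only [trace, Fintype.sum_prod_type]
  exact Finset.sum_congr rfl fun r _ => hΦ (of fun a b => M (r, a) (r, b))

lemma IsChannel.isState_idTensor {dA : ℕ} {ιB : Type*} [Fintype ιB]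
    {Λ : Matrix (Fin dA) (Fin dA) ℂ →ₗ[ℂ] Matrix ιB ιB ℂ} (hΛ : IsChannel Λ)
    {ρ : Matrix (Fin dA × Fin dA) (Fin dA × Fin dA) ℂ} (hρ : IsState ρ) :
    IsState (idTensor (Fin dA) Λ ρ) :=
  ⟨hΛ.1 dA ρ hρ.1, by rw [trace_idTensor hΛ.2, hρ.2]⟩

variable {ιA ιB : Type*} [Fintype ιA] [Fintype ιB] [DecidableEq ιA] [DecidableEq ιB]

lemma diamondNorm_nonneg (Φ : Matrix ιA ιA ℂ →ₗ[ℂ] Matrix ιB ιB ℂ) : 0 ≤ diamondNorm Φ :=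
  Real.sSup_nonneg (by rintro _ ⟨ρ, -, rfl⟩; exact traceNorm_nonneg _)

lemma traceNorm_idTensor_le_diamondNorm (Φ : Matrix ιA ιA ℂ →ₗ[ℂ] Matrix ιB ιB ℂ)
    {ρ : Matrix (ιA × ιA) (ιA × ιA) ℂ} (hρ : IsState ρ) :
    traceNorm (idTensor ιA Φ ρ) ≤ diamondNorm Φ := by
  let L := LinearMap.toContinuousLinearMap (idTensor ιA Φ)
  refine le_csSup ⟨Fintype.card (ιA × ιB) * ‖L‖, ?_⟩ ⟨ρ, hρ, rfl⟩
  rintro _ ⟨σ, hσ, rfl⟩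
  have hσ₁ : ‖σ‖ ≤ 1 := by simpa [hσ.2] using hσ.1.norm_le_re_trace
  calc traceNorm (idTensor ιA Φ σ) ≤ Fintype.card (ιA × ιB) * ‖L σ‖ := traceNorm_le_card_mul_norm _
    _ ≤ Fintype.card (ιA × ιB) * ‖L‖ := by
      gcongr
      exact (L.le_opNorm σ).trans (mul_le_of_le_one_right (norm_nonneg _) hσ₁)

end Channels

/-- **Stability of the tempered robustness under diamond-norm perturbations.**
If `Λ, Λ'` are channels with `(1/2)‖Λ − Λ'‖_⋄ ≤ ε`, then
`1 + 2 R^τ(Λ'|Λ) ≥ (1 − 2ε)(1 + 2 R^τ(Λ))`. -/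
theorem chanTemperedRob_diamond_perturbation {dA dB : ℕ}
    (Λ Λ' : Matrix (Fin dA) (Fin dA) ℂ →ₗ[ℂ] Matrix (Fin dB) (Fin dB) ℂ)
    (hΛ : IsChannel Λ) (hΛ' : IsChannel Λ') (ε : ℝ)
    (hε : (1 / 2 : ℝ) * diamondNorm (Λ - Λ') ≤ ε) :
    1 + 2 * chanTemperedRobRel Λ' Λ ≥ (1 - 2 * ε) * (1 + 2 * chanTemperedRobRel Λ Λ) := by
  have hε₀ : 0 ≤ ε := by linarith [diamondNorm_nonneg (Λ - Λ')]
  have hclose : ∀ ρ, IsState ρ →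
      traceNorm (idTensor (Fin dA) Λ ρ - idTensor (Fin dA) Λ' ρ) ≤ 2 * ε := fun ρ hρ => by
    rw [← idTensor_sub]
    linarith [traceNorm_idTensor_le_diamondNorm (Λ - Λ') hρ]
  refine mul_one_add_two_mul_sSup_le (by linarith)
    (fun ρ hρ => temperedRobRel_nonneg (hΛ.isState_idTensor hρ) (hΛ.isState_idTensor hρ))
    (fun ρ hρ => temperedRobRel_nonneg (hΛ'.isState_idTensor hρ) (hΛ.isState_idTensor hρ))
    ⟨_, by rintro _ ⟨ρ, hρ, rfl⟩; exact temperedRobRel_le_card (hΛ'.isState_idTensor hρ) _⟩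
    fun ρ hρ => mul_one_add_two_mul_temperedRobRel_le (hΛ.isState_idTensor hρ)
      (hΛ'.isState_idTensor hρ) (hclose ρ hρ)
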